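/- arXiv:2006.12118 — 3 statements merged into one kernel-verified Lean document; each statement's English description precedes it below -/
import Mathlib

section
/- Let n ≥ 3 and let P(x,y) = (1/(n·α(n))) · (1 − |x|²)/|x − y|ⁿ be the Poisson kernel of the unit ball in ℝⁿ. Then for each i = 1, …, n, lim_{h → 0} ∫_{|y|=1} | yᵢ/α(n) − (P(h·eᵢ, y) − P(0, y))/h | dS(y) = 0, where eᵢ is the i-th standard basis vector and dS is the (n−1)-dimensional surface measure on the unit sphere. -/
open MeasureTheory Filter Metric Topology

noncomputable section

abbrev Euc (n : ℕ) := EuclideanSpace ℝ (Fin n)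

/-- The Laplacian of a function on `ℝⁿ`, as the sum of second partial derivatives. -/
def lap (n : ℕ) (φ : Euc n → ℝ) (x : Euc n) : ℝ :=
  ∑ i : Fin n,
    fderiv ℝ (fun z => fderiv ℝ φ z (EuclideanSpace.single i 1)) x (EuclideanSpace.single i 1)

/-- `u` solves `-Δu = f` in the sense of distributions on `ℝⁿ`. -/
def IsDistribSol (n : ℕ) (u f : Euc n → ℝ) : Prop :=
  ∀ φ : Euc n → ℝ, ContDiff ℝ (⊤ : ℕ∞) φ → HasCompactSupport φ →
    -∫ x, u x * lap n φ x = ∫ x, f x * φ x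

/-- Bochner almost periodicity: every sequence of translates has a uniformly
convergent subsequence. -/
def AlmostPeriodic (n : ℕ) (f : Euc n → ℝ) : Prop :=
  Continuous f ∧
    ∀ x : ℕ → Euc n, ∃ k : ℕ → ℕ, StrictMono k ∧ ∃ g : Euc n → ℝ,
      TendstoUniformly (fun j z => f (z + x (k j))) g atTop

/-- `α(n)`: the Lebesgue volume of the unit ball of `ℝⁿ`. -/
def alphaB (n : ℕ) : ℝ := (volume (ball (0 : Euc n) 1)).toReal

/-- The Poisson kernel of the unit ball. -/
def PoisK (n : ℕ) (x y : Euc n) : ℝ :=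
  1 / (n * alphaB n) * ((1 - ‖x‖ ^ 2) / ‖x - y‖ ^ n)

/-- Green's function of the unit ball (n ≥ 3):
`G(x,y) = Φ(y-x) - 1/(n(n-2)α(n)) ‖|y|·x - y/|y|‖^{-(n-2)}`. -/
def GreenB (n : ℕ) (x y : Euc n) : ℝ :=
  1 / (n * ((n : ℝ) - 2) * alphaB n) * (1 / ‖y - x‖ ^ (n - 2))
    - 1 / (n * ((n : ℝ) - 2) * alphaB n) * (1 / ‖‖y‖ • x - ‖y‖⁻¹ • y‖ ^ (n - 2))

/-! For `‖y‖ = 1` and `a = yᵢ` we have `‖h eᵢ - y‖² = 1 - 2ah + h²`, so the integrand depends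
only on `h` and `a`. An algebraic rewriting of the difference quotient exhibits it as a function
of `(h, a)` that is continuous across `h = 0`, with value `a / α(n)` there; uniform continuity on
the compact range `a ∈ [-1, 1]` upgrades the pointwise limit to uniform convergence on the sphere.
The integrals then tend to zero because the sphere has finite `(n-1)`-dimensional Hausdorff
measure: it is covered by the radial projections of the `2n` faces of the cube `[-1, 1]ⁿ`, which
are Lipschitz images of `(n-1)`-dimensional cubes. -/

open scoped ENNReal

lemma IsCompact.tendstoUniformlyOn_of_continuousOn_prod {α β E : Type*} [TopologicalSpace α]
    [TopologicalSpace β] [UniformSpace E] {f : α → β → E} {s : Set α} {k : Set β} {q : α}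
    (hk : IsCompact k) (hf : ContinuousOn (Function.uncurry f) (s ×ˢ k)) (hq : q ∈ s) :
    TendstoUniformlyOn f (f q) (𝓝[s] q) k := fun u hu => by
  obtain ⟨v, hv, hvu⟩ := hk.mem_uniformity_of_prod hf hq (tendsto_swap_uniformity hu)
  exact Filter.mem_of_superset hv fun p hp x hx => hvu p hp x hx

lemma tendsto_setIntegral_dist_of_tendstoUniformlyOn {ι α E : Type*} [MeasurableSpace α]
    [PseudoMetricSpace E] {μ : Measure α} {s : Set α} (hs : μ s < ∞) {l : Filter ι}
    {F : ι → α → E} {f : α → E} (hF : TendstoUniformlyOn F f l s) :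
    Tendsto (fun i => ∫ x in s, dist (f x) (F i x) ∂μ) l (𝓝 0) := by
  rw [Metric.tendsto_nhds]
  intro ε hε
  have hδ : 0 < ε / (μ.real s + 1) := by positivity
  filter_upwards [Metric.tendstoUniformlyOn_iff.mp hF _ hδ] with i hi
  have hbound : ∀ x ∈ s, ‖dist (f x) (F i x)‖ ≤ ε / (μ.real s + 1) := fun x hx => by
    rw [Real.norm_of_nonneg dist_nonneg]
    exact (hi x hx).le
  rw [dist_zero_right]
  calc _ ≤ ε / (μ.real s + 1) * μ.real s := norm_setIntegral_le_of_norm_le_const hs hbound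
    _ < ε := by
      rw [div_mul_eq_mul_div, div_lt_iff₀ (by positivity)]
      nlinarith [measureReal_nonneg (μ := μ) (s := s)]

lemma lipschitzOnWith_inv_norm_smul {E : Type*} [NormedAddCommGroup E] [NormedSpace ℝ E] :
    LipschitzOnWith 2 (fun x : E => ‖x‖⁻¹ • x) {x | 1 ≤ ‖x‖} := by
  refine LipschitzOnWith.of_dist_le_mul fun x (hx : 1 ≤ ‖x‖) y (hy : 1 ≤ ‖y‖) => ?_
  have hx0 : 0 < ‖x‖ := one_pos.trans_le hx
  have hy0 : 0 < ‖y‖ := one_pos.trans_le hy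
  have hsplit : ‖x‖⁻¹ • x - ‖y‖⁻¹ • y = ‖x‖⁻¹ • (x - y) + (‖x‖⁻¹ - ‖y‖⁻¹) • y := by module
  have h₁ : ‖‖x‖⁻¹ • (x - y)‖ ≤ ‖x - y‖ := by
    rw [norm_smul, norm_inv, norm_norm]
    exact mul_le_of_le_one_left (norm_nonneg _) (inv_le_one_of_one_le₀ hx)
  have h₂ : ‖(‖x‖⁻¹ - ‖y‖⁻¹) • y‖ ≤ ‖x - y‖ := by
    rw [norm_smul, inv_sub_inv hx0.ne' hy0.ne', norm_div, Real.norm_eq_abs, Real.norm_of_nonneg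
      (by positivity), div_mul_eq_mul_div, mul_div_mul_right _ _ hy0.ne', abs_sub_comm]
    exact (div_le_self (abs_nonneg _) hx).trans (abs_norm_sub_norm_le x y)
  rw [dist_eq_norm, dist_eq_norm, hsplit, NNReal.coe_ofNat, two_mul]
  exact (norm_add_le _ _).trans (add_le_add h₁ h₂)

section CubeFace

variable {ι : Type*} [Fintype ι] [DecidableEq ι]

def cubeFace (j : ι) (σ : ℝ) (u : {k // k ≠ j} → ℝ) : EuclideanSpace ℝ ι :=
  WithLp.toLp 2 fun k => if hk : k = j then σ else u ⟨k, hk⟩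

lemma exists_lipschitzWith_cubeFace (j : ι) (σ : ℝ) : ∃ K, LipschitzWith K (cubeFace j σ) := by
  have hins : LipschitzWith 1 fun (u : {k // k ≠ j} → ℝ) k => if hk : k = j then σ else u ⟨k, hk⟩ :=
    LipschitzWith.of_dist_le_mul fun u v => by
      refine dist_pi_le_iff (by positivity) |>.mpr fun k => ?_
      by_cases hk : k = j
      · simp [hk]
      · simpa [hk] using dist_le_pi_dist u v ⟨k, hk⟩
  exact ⟨_, (PiLp.lipschitzWith_toLp 2 fun _ => ℝ).comp hins⟩

lemma one_le_norm_cubeFace (j : ι) {σ : ℝ} (hσ : |σ| = 1) (u : {k // k ≠ j} → ℝ) :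
    1 ≤ ‖cubeFace j σ u‖ := by
  simpa [cubeFace, hσ] using PiLp.norm_apply_le (cubeFace j σ u) j

lemma sphere_subset_iUnion_cubeFace :
    sphere (0 : EuclideanSpace ℝ ι) 1 ⊆ ⋃ j, ⋃ σ ∈ ({-1, 1} : Finset ℝ),
      (fun u => ‖cubeFace j σ u‖⁻¹ • cubeFace j σ u) '' closedBall 0 1 := by
  intro y hy
  rw [mem_sphere_zero_iff_norm] at hy
  have : Nonempty ι := by
    by_contra h
    rw [not_nonempty_iff] at h
    simp [Subsingleton.elim y 0] at hy
  obtain ⟨j, hj⟩ := Finite.exists_max fun k => |y k|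
  have hyj : 0 < |y j| := by
    by_contra! h
    have : y = 0 := by
      ext k
      simpa using (hj k).trans h
    simp [this] at hy
  have hface : cubeFace j (y j / |y j|) (fun k => y k / |y j|) = |y j|⁻¹ • y := by
    ext k
    by_cases hk : k = j <;> simp [cubeFace, hk, div_eq_inv_mul]
  simp only [Set.mem_iUnion]
  refine ⟨j, y j / |y j|, ?_, fun k => y k / |y j|, ?_, ?_⟩
  · rcases abs_choice (y j) with h | h <;> simp [h, div_neg, div_self (abs_pos.mp hyj)]
  · refine mem_closedBall_zero_iff.mpr (pi_norm_le_iff_of_nonneg zero_le_one |>.mpr fun k => ?_)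
    rw [Real.norm_eq_abs, abs_div, abs_abs]
    exact div_le_one_of_le₀ (hj k) hyj.le
  · simp only [hface, norm_smul, hy, norm_inv, Real.norm_eq_abs, abs_abs, mul_one, inv_inv,
      smul_smul, mul_inv_cancel₀ hyj.ne', one_smul]

end CubeFace

lemma hausdorffMeasure_sphere_lt_top {ι : Type*} [Fintype ι] :
    μH[(Fintype.card ι : ℝ) - 1] (sphere (0 : EuclideanSpace ℝ ι) 1) < ∞ := by
  classical
  refine (measure_mono sphere_subset_iUnion_cubeFace).trans_lt <|
    (measure_iUnion_le _).trans_lt ?_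
  rw [tsum_fintype, ENNReal.sum_lt_top]
  intro j _
  refine (measure_biUnion_finset_le _ _).trans_lt (ENNReal.sum_lt_top.mpr fun σ hσ => ?_)
  have hσ : |σ| = 1 := by rcases Finset.mem_insert.mp hσ with rfl | hσ <;> simp_all
  have hcard : ((Fintype.card {k // k ≠ j} : ℕ) : ℝ) = Fintype.card ι - 1 := by
    rw [Fintype.card_subtype_compl, Fintype.card_subtype_eq,
      Nat.cast_sub (Fintype.card_pos_iff.mpr ⟨j⟩), Nat.cast_one]
  have hd : (0 : ℝ) ≤ Fintype.card ι - 1 := by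
    rw [← hcard]
    positivity
  have hball : μH[(Fintype.card ι : ℝ) - 1] (closedBall (0 : {k // k ≠ j} → ℝ) 1) < ∞ := by
    rw [← hcard, hausdorffMeasure_pi_real]
    exact measure_closedBall_lt_top
  obtain ⟨K, hK⟩ := exists_lipschitzWith_cubeFace j σ
  have hlip : LipschitzOnWith (2 * K) (fun u => ‖cubeFace j σ u‖⁻¹ • cubeFace j σ u)
      (closedBall 0 1) :=
    lipschitzOnWith_inv_norm_smul.comp hK.lipschitzOnWith fun u _ => one_le_norm_cubeFace j hσ u
  exact (hlip.hausdorffMeasure_image_le hd).trans_lt <|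
    ENNReal.mul_lt_top (ENNReal.rpow_lt_top_of_nonneg hd ENNReal.coe_ne_top) hball

lemma abs_apply_le_one_of_norm_eq_one {ι : Type*} [Fintype ι] {y : EuclideanSpace ℝ ι}
    (hy : ‖y‖ = 1) (i : ι) : |y i| ≤ 1 :=
  hy ▸ PiLp.norm_apply_le y i

lemma alphaB_pos (n : ℕ) : 0 < alphaB n :=
  ENNReal.toReal_pos (measure_ball_pos _ _ one_pos).ne' measure_ball_lt_top.ne

lemma one_sub_two_mul_add_sq_pos {a h : ℝ} (ha : |a| ≤ 1) (hh : |h| < 1) :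
    0 < 1 - 2 * a * h + h ^ 2 := by
  have : a * h ≤ |h| := (le_abs_self _).trans (by rw [abs_mul]; nlinarith [abs_nonneg h])
  nlinarith [sq_abs h, abs_nonneg h]

/-- The distance from `h • eᵢ` to a point `y` of the unit sphere with `yᵢ = a`. -/
def chord (h a : ℝ) : ℝ := √(1 - 2 * a * h + h ^ 2)

lemma chord_pos {a h : ℝ} (ha : |a| ≤ 1) (hh : |h| < 1) : 0 < chord h a :=
  Real.sqrt_pos.mpr (one_sub_two_mul_add_sq_pos ha hh)

lemma norm_smul_single_sub {ι : Type*} [Fintype ι] [DecidableEq ι] (i : ι) (h : ℝ)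
    {y : EuclideanSpace ℝ ι} (hy : ‖y‖ = 1) :
    ‖h • EuclideanSpace.single i (1 : ℝ) - y‖ = chord h (y i) := by
  rw [chord, ← Real.sqrt_sq (norm_nonneg _), norm_sub_sq_real, norm_smul, PiLp.norm_single,
    real_inner_smul_left, EuclideanSpace.inner_single_left, hy]
  congr 1
  simp only [norm_one, mul_one, Real.norm_eq_abs, sq_abs, map_one, one_mul]
  ring

/-- The difference quotient `(P(h eᵢ, y) - P(0, y)) / h` of the Poisson kernel as a function of
`h` and `a = yᵢ`, written with `1 - r = h (2a - h) / (1 + r)` and `1 - rⁿ = (1 - r) ∑ rᵏ`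
(`r = chord h a`) so that it extends continuously across `h = 0`. -/
def poissonDiffQuot (n : ℕ) (h a : ℝ) : ℝ :=
  1 / (n * alphaB n) *
    (((2 * a - h) * (∑ k ∈ Finset.range n, chord h a ^ k) / (1 + chord h a) - h) / chord h a ^ n)

lemma poissonDiffQuot_zero {n : ℕ} (hn : n ≠ 0) (a : ℝ) : poissonDiffQuot n 0 a = a / alphaB n := by
  have := (alphaB_pos n).ne'
  simp [poissonDiffQuot, chord]
  field_simp
  ring

lemma poissonDiffQuot_eq {n : ℕ} {a h : ℝ} (ha : |a| ≤ 1) (hh : |h| < 1) (h0 : h ≠ 0) :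
    poissonDiffQuot n h a = 1 / (n * alphaB n) * (((1 - h ^ 2) / chord h a ^ n - 1) / h) := by
  have hr := chord_pos ha hh
  have hr_sq : chord h a ^ 2 = 1 - 2 * a * h + h ^ 2 :=
    Real.sq_sqrt (one_sub_two_mul_add_sq_pos ha hh).le
  have hgeom := geom_sum_mul (chord h a) n
  rw [poissonDiffQuot]
  congr 1
  field_simp
  linear_combination (∑ k ∈ Finset.range n, chord h a ^ k) * hr_sq - (1 + chord h a) * hgeom

lemma continuousOn_poissonDiffQuot (n : ℕ) :
    ContinuousOn (Function.uncurry (poissonDiffQuot n)) (Set.Ioo (-1) 1 ×ˢ Set.Icc (-1) 1) := by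
  have hr : ∀ p ∈ Set.Ioo (-1 : ℝ) 1 ×ˢ Set.Icc (-1 : ℝ) 1, 0 < chord p.1 p.2 := fun p hp =>
    chord_pos (abs_le.mpr hp.2) (abs_lt.mpr hp.1)
  have hc : Continuous fun p : ℝ × ℝ => chord p.1 p.2 := by unfold chord; fun_prop
  unfold Function.uncurry poissonDiffQuot
  refine continuousOn_const.mul (ContinuousOn.div ?_ (by fun_prop) fun p hp => ?_)
  · refine ContinuousOn.sub (ContinuousOn.div (by fun_prop) (by fun_prop) fun p hp => ?_)
      (by fun_prop)
    linarith [hr p hp]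
  · exact pow_ne_zero _ (hr p hp).ne'

lemma PoisK_diffQuot {n : ℕ} (i : Fin n) {h : ℝ} (hh : |h| < 1) (h0 : h ≠ 0) {y : Euc n}
    (hy : ‖y‖ = 1) :
    (PoisK n (h • EuclideanSpace.single i 1) y - PoisK n 0 y) / h = poissonDiffQuot n h (y i) := by
  rw [poissonDiffQuot_eq (abs_apply_le_one_of_norm_eq_one hy i) hh h0, PoisK, PoisK,
    norm_smul_single_sub i h hy, norm_smul, PiLp.norm_single]
  simp only [Real.norm_eq_abs, sq_abs, norm_one, mul_one, zero_sub, norm_neg, hy, norm_zero]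
  ring

lemma tendstoUniformlyOn_poissonDiffQuot {n : ℕ} (hn : n ≠ 0) :
    TendstoUniformlyOn (poissonDiffQuot n) (fun a => a / alphaB n) (𝓝 0) (Set.Icc (-1) 1) := by
  have h := isCompact_Icc.tendstoUniformlyOn_of_continuousOn_prod (continuousOn_poissonDiffQuot n)
    (by norm_num : (0 : ℝ) ∈ Set.Ioo (-1) 1)
  rwa [nhdsWithin_eq_nhds.mpr (Ioo_mem_nhds (by norm_num) (by norm_num)),
    funext (poissonDiffQuot_zero hn)] at h

theorem stmt6_general (n : ℕ) (i : Fin n) :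
    Tendsto (fun h : ℝ =>
        ∫ y in sphere (0 : Euc n) 1,
          |y i / alphaB n -
              (PoisK n (h • EuclideanSpace.single i 1) y - PoisK n 0 y) / h|
            ∂(μH[(n : ℝ) - 1]))
      (𝓝[≠] (0 : ℝ)) (𝓝 0) := by
  have hsphere : μH[(n : ℝ) - 1] (sphere (0 : Euc n) 1) < ∞ := by
    simpa using hausdorffMeasure_sphere_lt_top (ι := Fin n)
  have hunif : TendstoUniformlyOn (fun h (y : Euc n) => poissonDiffQuot n h (y i))
      (fun y => y i / alphaB n) (𝓝[≠] 0) (sphere 0 1) := by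
    have hmaps : sphere (0 : Euc n) 1 ⊆ (fun y : Euc n => y i) ⁻¹' Set.Icc (-1) 1 := fun y hy =>
      abs_le.mp (abs_apply_le_one_of_norm_eq_one (mem_sphere_zero_iff_norm.mp hy) i)
    have h := ((tendstoUniformlyOn_poissonDiffQuot i.pos.ne').comp fun y : Euc n => y i).mono hmaps
    exact fun u hu => nhdsWithin_le_nhds (h u hu)
  have hsmall : ∀ᶠ h in 𝓝[≠] (0 : ℝ), |h| < 1 ∧ h ≠ 0 := by
    have : ∀ᶠ h in 𝓝 (0 : ℝ), |h| < 1 := by simpa using eventually_abs_sub_lt (0 : ℝ) one_pos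
    exact Eventually.and (nhdsWithin_le_nhds this) self_mem_nhdsWithin
  refine (tendsto_setIntegral_dist_of_tendstoUniformlyOn hsphere hunif).congr' ?_
  filter_upwards [hsmall] with h ⟨hh, h0⟩
  refine setIntegral_congr_fun isClosed_sphere.measurableSet fun y hy => ?_
  rw [Real.dist_eq, PoisK_diffQuot i hh h0 (mem_sphere_zero_iff_norm.mp hy)]

/-- L¹-convergence on the unit sphere of the difference quotients of
the Poisson kernel at the origin to `yᵢ/α(n)`. -/
theorem stmt6 (n : ℕ) (hn : 3 ≤ n) (i : Fin n) :
    Tendsto (fun h : ℝ =>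
        ∫ y in sphere (0 : Euc n) 1,
          |y i / alphaB n -
              (PoisK n (h • EuclideanSpace.single i 1) y - PoisK n 0 y) / h|
            ∂(μH[(n : ℝ) - 1]))
      (𝓝[≠] (0 : ℝ)) (𝓝 0) :=
  stmt6_general n i
end
end

section
/- Let n ≥ 3 and let G(x,y) = Φ(y − x) − 1/(n(n−2)α(n)) · ‖|y|·x − y/|y|‖^{−(n−2)} be the Green's function of the unit ball in ℝⁿ. Then for every x with |x| < 1 and every y with |y| = 1, the directional derivative of the map z ↦ G(x, z) at the point y in the direction y (the outward normal derivative) exists and equals ∂G/∂ν(x,y) = −(1/(n·α(n))) · (1 − |x|²)/|x − y|ⁿ. -/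
open MeasureTheory Filter Metric Topology

noncomputable section

/-!
Along the normal ray `t ↦ (1 + t) • y` the Kelvin-reflected point `|z| x - z / |z|` becomes
`(x - y) + t • x`, while `z - x = (y - x) + t • y`. Both terms of `G` therefore have the shape
`t ↦ ‖u + t • v‖^{-(n-2)}`, whose derivative at `0` is `-(n-2) ⟪u, v⟫ / ‖u‖ⁿ`, and the two inner
products differ by `⟪x - y, x + y⟫ = |x|² - 1`; the factor `n - 2` cancels the one in the
normalising constant.
-/

open InnerProductSpace RealInnerProductSpace

section InverseNormPower

variable {E : Type*} [NormedAddCommGroup E] [InnerProductSpace ℝ E]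

theorem hasDerivAt_norm_add_smul {u : E} (hu : u ≠ 0) (v : E) :
    HasDerivAt (fun t : ℝ => ‖u + t • v‖) (⟪u, v⟫ / ‖u‖) 0 := by
  have hline : HasDerivAt (fun t : ℝ => u + t • v) v 0 := by
    simpa using ((hasDerivAt_id (0 : ℝ)).smul_const v).const_add u
  have hsq := hline.norm_sq.sqrt (by simpa using hu)
  simp only [zero_smul, add_zero, Real.sqrt_sq (norm_nonneg _)] at hsq
  convert hsq using 1
  field_simp

theorem hasDerivAt_one_div_norm_add_smul_pow {u : E} (hu : u ≠ 0) (v : E) (m : ℕ) :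
    HasDerivAt (fun t : ℝ => 1 / ‖u + t • v‖ ^ m) (-(m * ⟪u, v⟫) / ‖u‖ ^ (m + 2)) 0 := by
  have hu' : ‖u‖ ≠ 0 := norm_ne_zero_iff.2 hu
  have hinv :=
    ((hasDerivAt_norm_add_smul hu v).fun_pow m).fun_inv (by simpa using pow_ne_zero m hu')
  simp only [zero_smul, add_zero] at hinv
  simp only [one_div]
  refine hinv.congr_deriv ?_
  cases m with
  | zero => simp
  | succ k => rw [Nat.add_sub_cancel]; field_simp; ring

end InverseNormPower

theorem norm_smul_smul_sub_inv_smul {E : Type*} [NormedAddCommGroup E] [NormedSpace ℝ E]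
    {y : E} (hy : ‖y‖ = 1) {s : ℝ} (hs : 0 < s) (x : E) :
    ‖s • y‖ • x - ‖s • y‖⁻¹ • (s • y) = s • x - y := by
  rw [norm_smul, hy, mul_one, Real.norm_of_nonneg hs.le, smul_smul, inv_mul_cancel₀ hs.ne',
    one_smul]

theorem greenB_add_smul_self (n : ℕ) (x : Euc n) {y : Euc n} (hy : ‖y‖ = 1) {t : ℝ}
    (ht : -1 < t) :
    GreenB n x (y + t • y) =
      1 / (n * ((n : ℝ) - 2) * alphaB n) * (1 / ‖(y - x) + t • y‖ ^ (n - 2))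
        - 1 / (n * ((n : ℝ) - 2) * alphaB n) * (1 / ‖(x - y) + t • x‖ ^ (n - 2)) := by
  have hy' : y + t • y = (1 + t) • y := by rw [add_smul, one_smul]
  rw [GreenB, hy', norm_smul_smul_sub_inv_smul hy (by linarith), add_smul, add_smul, one_smul,
    one_smul, add_sub_right_comm, add_sub_right_comm x]

/-- the outward normal derivative of the Green's function of the unit
ball at a boundary point `y` equals minus the Poisson kernel. -/
theorem stmt13 (n : ℕ) (hn : 3 ≤ n) (x y : Euc n) (hx : ‖x‖ < 1) (hy : ‖y‖ = 1) :
    HasLineDerivAt ℝ (fun z => GreenB n x z)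
      (-(1 / (n * alphaB n)) * ((1 - ‖x‖ ^ 2) / ‖x - y‖ ^ n)) y y := by
  have hxy : x ≠ y := fun h => (h ▸ hx).ne hy
  set c : ℝ := 1 / (n * ((n : ℝ) - 2) * alphaB n)
  have hG := ((hasDerivAt_one_div_norm_add_smul_pow (sub_ne_zero.2 hxy.symm) y (n - 2)).const_mul
    c).sub ((hasDerivAt_one_div_norm_add_smul_pow (sub_ne_zero.2 hxy) x (n - 2)).const_mul c)
  refine (hG.congr_of_eventuallyEq ?_).congr_deriv ?_
  · filter_upwards [Ioi_mem_nhds (show (-1 : ℝ) < 0 by norm_num)] with t ht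
    exact greenB_add_smul_self n x hy ht
  · have hinner : ⟪x - y, x⟫ - ⟪y - x, y⟫ = ‖x‖ ^ 2 - 1 := by
      rw [← neg_sub x y, inner_neg_left, inner_sub_left, inner_sub_left, real_inner_comm y x,
        real_inner_self_eq_norm_sq, real_inner_self_eq_norm_sq, hy]
      ring
    obtain ⟨m, rfl⟩ : ∃ m, n = m + 2 := ⟨n - 2, by omega⟩
    have hm : (m : ℝ) ≠ 0 := by norm_cast; omega
    rw [norm_sub_rev y x, Nat.add_sub_cancel]
    simp only [c]
    push_cast
    rw [show ⟪y - x, y⟫ = ⟪x - y, x⟫ - (‖x‖ ^ 2 - 1) by linarith, add_sub_cancel_right]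
    field_simp
    ring
end
end

section
/- Let n ≥ 3, let 0 < h < 1, let i ∈ {1, …, n}, and let y ∈ ℝⁿ with 0 < |y| ≤ 1. Then ‖|y|·h·eᵢ − y/|y|‖ ≥ 1 − h and | 1 − ‖|y|·h·eᵢ − y/|y|‖^{−(n−2)} | ≤ ((n−2)/2) · h · ( 1 + (1 − h)^{−(n−1)} ), where eᵢ is the i-th standard basis vector. -/
/-!
Write `r = ‖|y| h eᵢ − y/|y|‖`. Since `y/|y|` is a unit vector and `‖|y| h eᵢ‖ ≤ h`, the reverse
triangle inequality gives `|r − 1| ≤ h`, so everything reduces to a one-variable estimate. With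
`m = n − 2` and `t = (1 − h)⁻¹ ≥ r⁻¹`, the geometric sum
`1 − r⁻ᵐ = (r − 1) ∑_{j<m} r^{-(j+1)}` is at most `h ∑_{j<m} t^{j+1}` in absolute value, and pairing
the terms `t^{j+1}` and `t^{m−j}` (whose product is `t^{m+1}`) bounds that sum by `(m/2)(1 + t^{m+1})`.
-/

open Metric

noncomputable section

open Finset

section OneVariable

variable {K : Type*}

lemma one_sub_inv_pow_eq_mul_sum [Field K] {r : K} (hr : r ≠ 0) (m : ℕ) :
    1 - (r ^ m)⁻¹ = (r - 1) * ∑ j ∈ range m, r⁻¹ ^ (j + 1) := by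
  have hfactor : (r - 1) * r⁻¹ = 1 - r⁻¹ := by field_simp
  simp_rw [pow_succ, ← sum_mul, mul_comm _ r⁻¹, ← mul_assoc, hfactor, mul_neg_geom_sum, inv_pow]

variable [CommRing K] [LinearOrder K] [IsStrictOrderedRing K]

lemma pow_add_pow_le_one_add_pow_add {t : K} (ht : 1 ≤ t) (a b : ℕ) :
    t ^ a + t ^ b ≤ 1 + t ^ (a + b) := by
  have := mul_nonneg (sub_nonneg.mpr (one_le_pow₀ ht : 1 ≤ t ^ a))
    (sub_nonneg.mpr (one_le_pow₀ ht : 1 ≤ t ^ b))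
  rw [pow_add]
  linarith

lemma two_mul_sum_range_pow_succ_le {t : K} (ht : 1 ≤ t) (m : ℕ) :
    2 * ∑ j ∈ range m, t ^ (j + 1) ≤ m * (1 + t ^ (m + 1)) := by
  have hreflect : ∑ j ∈ range m, t ^ (m - j) = ∑ j ∈ range m, t ^ (j + 1) := by
    rw [← sum_range_reflect]
    refine sum_congr rfl fun j hj => ?_
    have := mem_range.mp hj
    congr 1
    omega
  calc 2 * ∑ j ∈ range m, t ^ (j + 1)
      = ∑ j ∈ range m, (t ^ (j + 1) + t ^ (m - j)) := by rw [sum_add_distrib, hreflect]; ring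
    _ ≤ ∑ _j ∈ range m, (1 + t ^ (m + 1)) := by
      refine sum_le_sum fun j hj => ?_
      have hexp : j + 1 + (m - j) = m + 1 := by have := mem_range.mp hj; omega
      simpa only [hexp] using pow_add_pow_le_one_add_pow_add ht (j + 1) (m - j)
    _ = m * (1 + t ^ (m + 1)) := by rw [sum_const, card_range, nsmul_eq_mul]

end OneVariable

lemma abs_one_sub_one_div_pow_le {h r : ℝ} (h1 : h < 1) (hr : |r - 1| ≤ h) (m : ℕ) :
    |1 - 1 / r ^ m| ≤ m / 2 * h * (1 + 1 / (1 - h) ^ (m + 1)) := by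
  have hh : 0 < 1 - h := by linarith
  have h_nonneg : 0 ≤ h := (abs_nonneg _).trans hr
  have hr_lower : 1 - h ≤ r := by linarith [(abs_le.mp hr).1]
  have hr_pos : 0 < r := hh.trans_le hr_lower
  set t := (1 - h)⁻¹
  have ht : 1 ≤ t := one_le_inv₀ hh |>.mpr (by linarith)
  have hinv_le : r⁻¹ ≤ t := inv_anti₀ hh hr_lower
  have hsum_nonneg : 0 ≤ ∑ j ∈ range m, r⁻¹ ^ (j + 1) := sum_nonneg fun j _ => by positivity
  have hsum_le : ∑ j ∈ range m, r⁻¹ ^ (j + 1) ≤ ∑ j ∈ range m, t ^ (j + 1) :=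
    sum_le_sum fun j _ => pow_le_pow_left₀ (by positivity) hinv_le _
  have hpair := two_mul_sum_range_pow_succ_le ht m
  calc |1 - 1 / r ^ m| = |r - 1| * ∑ j ∈ range m, r⁻¹ ^ (j + 1) := by
        rw [one_div, one_sub_inv_pow_eq_mul_sum hr_pos.ne', abs_mul, abs_of_nonneg hsum_nonneg]
    _ ≤ h * ∑ j ∈ range m, t ^ (j + 1) := mul_le_mul hr hsum_le hsum_nonneg (by positivity)
    _ ≤ h * (m / 2 * (1 + t ^ (m + 1))) := by gcongr; linarith
    _ = m / 2 * h * (1 + 1 / (1 - h) ^ (m + 1)) := by rw [inv_pow, one_div]; ring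

lemma abs_norm_sub_sub_one_le {E : Type*} [SeminormedAddCommGroup E] {a b : E} (hb : ‖b‖ = 1) :
    |‖a - b‖ - 1| ≤ ‖a‖ := by
  simpa [hb] using abs_norm_sub_norm_le (a - b) (-b)

/-- for `0 < h < 1` and `0 < |y| ≤ 1`, the bounds
`‖|y|·h·eᵢ − y/|y|‖ ≥ 1 − h` and
`|1 − ‖|y|·h·eᵢ − y/|y|‖^{−(n−2)}| ≤ ((n−2)/2)·h·(1 + (1−h)^{−(n−1)})`. -/
theorem stmt19 (n : ℕ) (hn : 3 ≤ n) (h : ℝ) (h0 : 0 < h) (h1 : h < 1) (i : Fin n)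
    (y : Euc n) (hy0 : 0 < ‖y‖) (hy1 : ‖y‖ ≤ 1) :
    1 - h ≤ ‖(‖y‖ * h) • EuclideanSpace.single i 1 - ‖y‖⁻¹ • y‖ ∧
      |1 - 1 / ‖(‖y‖ * h) • EuclideanSpace.single i 1 - ‖y‖⁻¹ • y‖ ^ (n - 2)| ≤
        ((n : ℝ) - 2) / 2 * h * (1 + 1 / (1 - h) ^ (n - 1)) := by
  have hunit : ‖‖y‖⁻¹ • y‖ = 1 := norm_smul_inv_norm (norm_pos_iff.mp hy0)
  have hshift : ‖(‖y‖ * h) • EuclideanSpace.single i (1 : ℝ)‖ ≤ h := by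
    rw [norm_smul, PiLp.norm_single, norm_one, mul_one, Real.norm_of_nonneg (by positivity)]
    nlinarith
  have hdist := (abs_norm_sub_sub_one_le hunit).trans hshift
  refine ⟨by linarith [(abs_le.mp hdist).1], ?_⟩
  have hbound := abs_one_sub_one_div_pow_le h1 hdist (n - 2)
  rwa [Nat.cast_sub (by omega : 2 ≤ n), Nat.cast_ofNat, show n - 2 + 1 = n - 1 by omega] at hbound
end
end
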